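/- arXiv:1406.3930 — 2 statements merged into one kernel-verified Lean document; each statement's English description precedes it below -/
import Mathlib

section
/- Let m ≥ 2, n ≥ 1 and 0 ≤ u ≤ n be integers with m + u ≤ n, and let ψ be an approximating function. Let Γ ⊂ ℝ^{mn} × ℝ^n be the set of pairs (X,α) such that every m×m minor of the m×(n−u) matrix X̃ formed by the columns x^(u+1),…,x^(n) of X has determinant zero (equivalently, rank X̃ ≤ m−1). Then W_{u,α}(m,n;ψ) ⊆ Γ, the Hausdorff dimension of Γ equals mn + m + u − 1 < (m+1)n, and consequently dim W_{u,α}(m,n;ψ) ≤ mn + m + u − 1. -/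
open MeasureTheory Set Filter
open scoped ENNReal NNReal

noncomputable section

/-- The ambient space `ℝ^{mn} × ℝ^n`, with `X : Fin m → Fin n → ℝ` viewed as an
`m × n` matrix whose `i`-th column is `fun j => X j i`. -/
abbrev Espace (m n : ℕ) := (Fin m → Fin n → ℝ) × (Fin n → ℝ)

/-- The unit cube `I^{mn} × I^n` with `I = [-1/2, 1/2]`. -/
def unitCube (m n : ℕ) : Set (Espace m n) :=
  {p | (∀ i j, |p.1 i j| ≤ 1 / 2) ∧ ∀ i, |p.2 i| ≤ 1 / 2}

/-- Supremum norm of an integer vector, as a natural number. -/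
def qNorm {m : ℕ} (q : Fin m → ℤ) : ℕ := Finset.univ.sup fun i => (q i).natAbs

/-- `ψ` is an approximating function: positive and tending to `0` at infinity. -/
def IsApprox (ψ : ℕ → ℝ) : Prop := (∀ r, 0 < ψ r) ∧ Tendsto ψ atTop (nhds 0)

/-- `f` is a dimension function: continuous, increasing and positive on `(0,∞)`,
tending to `0` at `0⁺`. -/
def IsDimFun (f : ℝ → ℝ) : Prop :=
  ContinuousOn f (Ioi 0) ∧ MonotoneOn f (Ioi 0) ∧ (∀ r, 0 < r → 0 < f r) ∧
    Tendsto f (nhdsWithin 0 (Ioi 0)) (nhds 0)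

/-- `g` is monotonic on `(0,∞)`. -/
def MonoOn (g : ℝ → ℝ) : Prop := MonotoneOn g (Ioi 0) ∨ AntitoneOn g (Ioi 0)

/-- Hausdorff measure with gauge (dimension function) `f`. -/
def hGauge {E : Type*} [EMetricSpace E] [MeasurableSpace E] [BorelSpace E]
    (f : ℝ → ℝ) : Measure E :=
  Measure.mkMetric fun r => ENNReal.ofReal (f r.toReal)

/-- The set `W_{u,α}(m,n;ψ)` of pairs `(X, α)` in the unit cube such that for
infinitely many nonzero `q ∈ ℤ^m` there is `p ∈ ℤ^u` with
`|q·x⁽ⁱ⁾ − αᵢ − pᵢ| < ψ(|q|)` for `1 ≤ i ≤ u` and `|q·x⁽ⁱ⁾ − αᵢ| < ψ(|q|)` for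
`u + 1 ≤ i ≤ n`. -/
def Wmixed (m n u : ℕ) (ψ : ℕ → ℝ) : Set (Espace m n) :=
  {p | p ∈ unitCube m n ∧
    {q : Fin m → ℤ | q ≠ 0 ∧ ∃ v : Fin u → ℤ, ∀ i : Fin n,
      |(∑ j, (q j : ℝ) * p.1 j i) - p.2 i -
        (if h : (i : ℕ) < u then ((v ⟨(i : ℕ), h⟩ : ℤ) : ℝ) else 0)| < ψ (qNorm q)}.Infinite}

/-!
If the tail matrix `X̃` had rank `m`, then `q ↦ q X̃` would be injective, and
`|q X̃ - α̃| < ψ(|q|) ≤ sup ψ` would confine `q` to a bounded, hence finite, set of integer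
vectors; so `W ⊆ Γ`.

`X̃` has rank `≤ m - 1` iff one of its rows is a combination of the others. Hence `Γ` is a finite
union of `C¹` images of `ℝ^d`, `d = (m-1)n + u + (m-1) + n` (the other rows, the first `u`
entries of the dependent row, the coefficients, and `α`), and `dim Γ ≤ d`. Conversely, reading
off the first `m - 1` rows, the first `u + m - 1` entries of the last row and `α` is a linear
map sending `Γ` onto a set that contains the open set where the `(m-1) × (m-1)` block of
the first rows in the columns `u, …, u + m - 2` is invertible; so `dim Γ ≥ d`.
-/

open Matrix

theorem Matrix.rank_lt_card_height_iff {K m n : Type*} [Field K] [Fintype m] [Fintype n]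
    (A : Matrix m n K) : A.rank < Fintype.card m ↔ ∃ c ≠ 0, c ᵥ* A = 0 := by
  rw [A.rank_eq_finrank_span_row, ← Set.finrank, (finrank_range_le_card A.row).lt_iff_ne,
    Ne, eq_comm, ← linearIndependent_iff_card_eq_finrank_span, Fintype.not_linearIndependent_iff]
  simp only [vecMul_eq_sum, Function.ne_iff]
  exact exists_congr fun _ => and_comm

theorem Matrix.finite_setOf_intCast_vecMul_mem {m n : Type*} [Fintype m] [Fintype n]
    {A : Matrix m n ℝ} (hA : ∀ c, c ᵥ* A = 0 → c = 0) {B : Set (n → ℝ)}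
    (hB : Bornology.IsBounded B) : {q : m → ℤ | (fun i => (q i : ℝ)) ᵥ* A ∈ B}.Finite := by
  obtain ⟨K, -, hK⟩ := A.vecMulLinear.exists_antilipschitzWith
    (LinearMap.ker_eq_bot'.2 hA)
  have hcast : Isometry fun (q : m → ℤ) i => (q i : ℝ) :=
    Isometry.piMap (fun _ => ((↑) : ℤ → ℝ)) fun _ => Real.isometry_intCast
  have hbdd := (hK.comp hcast.antilipschitz).isBounded_preimage hB
  exact (Metric.finite_isBounded_inter_isClosed DiscreteTopology.isDiscrete hbdd
    isClosed_univ).subset fun q hq => ⟨hq, mem_univ q⟩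

def tailMatrix {m n : ℕ} (u : ℕ) (X : Fin m → Fin n → ℝ) : Matrix (Fin m) (Fin (n - u)) ℝ :=
  Matrix.of fun i j => X i ⟨u + j, by omega⟩

theorem Wmixed_subset_setOf_rank_lt {m n u : ℕ} {ψ : ℕ → ℝ} (hψ : BddAbove (range ψ)) :
    Wmixed m n u ψ ⊆ {p | (tailMatrix u p.1).rank < m} := by
  rintro p ⟨-, hinf⟩
  by_contra hrank
  obtain ⟨C, hC⟩ := hψ
  have hψC : ∀ r, ψ r ≤ max C 0 := fun r => (hC ⟨r, rfl⟩).trans (le_max_left _ _)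
  have hleft : ∀ c, c ᵥ* tailMatrix u p.1 = 0 → c = 0 := fun c hc => by
    by_contra hc0
    exact hrank (by simpa using (rank_lt_card_height_iff _).2 ⟨c, hc0, hc⟩)
  let αt : Fin (n - u) → ℝ := fun j => p.2 ⟨u + j, by omega⟩
  refine hinf ((Matrix.finite_setOf_intCast_vecMul_mem hleft
    (Metric.isBounded_closedBall (x := αt) (r := max C 0))).subset ?_)
  rintro q ⟨-, v, hv⟩
  refine mem_closedBall_iff_norm.2 <| (pi_norm_le_iff_of_nonneg ?_).2 fun j => ?_
  · exact le_max_right _ _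
  · have hj := (hv ⟨u + j, by omega⟩).le.trans (hψC _)
    simpa [tailMatrix, vecMul, dotProduct, αt, Nat.not_lt.2 (Nat.le_add_right u j)] using hj

-- Coordinates: the `r` rows other than the dependent one, the first `u` (unconstrained) entries of
-- the dependent row, its coefficients on the other rows, and `α`.
abbrev RowParam (r n u : ℕ) :=
  (Fin r → Fin n → ℝ) × (Fin u → ℝ) × (Fin r → ℝ) × (Fin n → ℝ)

def dependentRow {r n : ℕ} (u : ℕ) (Y : Fin r → Fin n → ℝ) (w : Fin u → ℝ) (c : Fin r → ℝ) :
    Fin n → ℝ :=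
  fun j => if h : (j : ℕ) < u then w ⟨j, h⟩ else ∑ t, c t * Y t j

def insertRow {r n u : ℕ} (i : Fin (r + 1)) (θ : RowParam r n u) : Espace (r + 1) n :=
  (Fin.insertNth i (dependentRow u θ.1 θ.2.1 θ.2.2.1) θ.1, θ.2.2.2)

theorem contDiff_insertRow {r n u : ℕ} (i : Fin (r + 1)) :
    ContDiff ℝ 1 (insertRow (n := n) (u := u) i) := by
  refine ContDiff.prodMk (contDiff_pi.2 fun k => ?_) (by fun_prop)
  obtain rfl | ⟨t, rfl⟩ := Fin.eq_self_or_eq_succAbove i k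
  · simp only [Fin.insertNth_apply_same]
    refine contDiff_pi.2 fun j => ?_
    unfold dependentRow
    split_ifs <;> fun_prop
  · simp only [Fin.insertNth_apply_succAbove]
    fun_prop

theorem rank_tailMatrix_insertRow_le {r n u : ℕ} (i : Fin (r + 1)) (θ : RowParam r n u) :
    (tailMatrix u (insertRow i θ).1).rank ≤ r := by
  have hdep : ∃ c ≠ 0, c ᵥ* tailMatrix u (insertRow i θ).1 = 0 := by
    refine ⟨Fin.insertNth i (-1) θ.2.2.1, Function.ne_iff.2 ⟨i, by simp⟩, ?_⟩
    ext j
    simp [vecMul, dotProduct, Fin.sum_univ_succAbove _ i, tailMatrix, insertRow,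
      dependentRow]
  simpa [Nat.lt_succ_iff] using (rank_lt_card_height_iff _).2 hdep

theorem exists_insertRow_eq {r n u : ℕ} (hun : u ≤ n) (p : Espace (r + 1) n)
    (hp : (tailMatrix u p.1).rank ≤ r) : ∃ i θ, insertRow (u := u) i θ = p := by
  obtain ⟨c, hc0, hc⟩ := (rank_lt_card_height_iff (tailMatrix u p.1)).1
    (by simpa using Nat.lt_succ_of_le hp)
  obtain ⟨i, hi⟩ := Function.ne_iff.1 hc0
  refine ⟨i, (fun t => p.1 (i.succAbove t), fun j => p.1 i ⟨j, by omega⟩,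
    fun t => -c (i.succAbove t) / c i, p.2), Prod.ext (funext fun k => ?_) rfl⟩
  obtain hk | ⟨t, rfl⟩ := Fin.eq_self_or_eq_succAbove i k
  · rw [hk]
    ext j
    simp only [insertRow, Fin.insertNth_apply_same, dependentRow]
    split_ifs with hj
    · rfl
    · have := congrFun hc (⟨j - u, by omega⟩ : Fin (n - u))
      have hj' : (⟨u + (j - u), by omega⟩ : Fin n) = j := Fin.ext (by simp; omega)
      simp only [vecMul, dotProduct, Fin.sum_univ_succAbove _ i, tailMatrix, of_apply,
        hj', Pi.zero_apply] at this
      simp only [neg_div, neg_mul, Finset.sum_neg_distrib, div_mul_eq_mul_div, ← Finset.sum_div,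
        eq_neg_of_add_eq_zero_right this]
      rw [neg_neg, mul_div_cancel_left₀ _ hi]
  · simp [insertRow]

def rowProj {r n u : ℕ} (hur : u + r ≤ n) (p : Espace (r + 1) n) : RowParam r n u :=
  (fun t => p.1 t.castSucc, fun j => p.1 (Fin.last r) ⟨j, by omega⟩,
    fun t => p.1 (Fin.last r) ⟨u + t, by omega⟩, p.2)

def pivotBlock {r n u : ℕ} (hur : u + r ≤ n) (Y : Fin r → Fin n → ℝ) :
    Matrix (Fin r) (Fin r) ℝ :=
  Matrix.of fun t s => Y t ⟨u + s, by omega⟩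

theorem contDiff_rowProj {r n u : ℕ} (hur : u + r ≤ n) : ContDiff ℝ 1 (rowProj hur) := by
  unfold rowProj; fun_prop

theorem rowProj_insertRow_last {r n u : ℕ} (hur : u + r ≤ n) (θ : RowParam r n u)
    (hθ : (pivotBlock hur θ.1).det ≠ 0) :
    rowProj hur (insertRow (Fin.last r)
      (θ.1, θ.2.1, θ.2.2.1 ᵥ* (pivotBlock hur θ.1)⁻¹, θ.2.2.2)) = θ := by
  obtain ⟨Y, w, z, α⟩ := θ
  have hz : (z ᵥ* (pivotBlock hur Y)⁻¹) ᵥ* pivotBlock hur Y = z := by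
    rw [vecMul_vecMul, nonsing_inv_mul _ (Ne.isUnit hθ), vecMul_one]
  refine Prod.ext (funext fun t => ?_) (Prod.ext (funext fun j => ?_) (Prod.ext ?_ rfl))
  · simp [rowProj, insertRow]
  · simp [rowProj, insertRow, dependentRow]
  · funext s
    simpa [rowProj, insertRow, dependentRow, vecMul, dotProduct, pivotBlock] using congrFun hz s

theorem finrank_rowParam (r n u : ℕ) : Module.finrank ℝ (RowParam r n u) = r * n + u + r + n := by
  simp [Module.finrank_pi_fintype, add_assoc]

theorem dimH_setOf_rank_tailMatrix_le {r n u : ℕ} (hur : u + r ≤ n) :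
    dimH {p : Espace (r + 1) n | (tailMatrix u p.1).rank ≤ r} =
      Module.finrank ℝ (RowParam r n u) := by
  set Γ := {p : Espace (r + 1) n | (tailMatrix u p.1).rank ≤ r}
  apply le_antisymm
  · have hcover : Γ ⊆ ⋃ i, range (insertRow (n := n) (u := u) i) := fun p hp => by
      obtain ⟨i, θ, rfl⟩ := exists_insertRow_eq (by omega) p hp
      exact mem_iUnion.2 ⟨i, θ, rfl⟩
    refine (dimH_mono hcover).trans ?_
    rw [dimH_iUnion]
    exact iSup_le fun i => (contDiff_insertRow i).dimH_range_le
  · let Y₀ : Fin r → Fin n → ℝ := fun t j => if (j : ℕ) = u + t then 1 else 0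
    have hY₀ : pivotBlock hur Y₀ = 1 := by
      ext t s
      simp [pivotBlock, Y₀, one_apply, Fin.ext_iff, eq_comm]
    have hopen : IsOpen {θ : RowParam r n u | (pivotBlock hur θ.1).det ≠ 0} :=
      isOpen_ne.preimage (by unfold pivotBlock; fun_prop)
    have hsub : {θ : RowParam r n u | (pivotBlock hur θ.1).det ≠ 0} ⊆ rowProj hur '' Γ :=
      fun θ hθ => ⟨_, rank_tailMatrix_insertRow_le _ _, rowProj_insertRow_last hur θ hθ⟩
    calc (Module.finrank ℝ (RowParam r n u) : ℝ≥0∞)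
        = dimH {θ : RowParam r n u | (pivotBlock hur θ.1).det ≠ 0} :=
          (Real.dimH_of_mem_nhds (hopen.mem_nhds (x := (Y₀, 0, 0, 0)) (by simp [hY₀]))).symm
      _ ≤ dimH (rowProj hur '' Γ) := dimH_mono hsub
      _ ≤ dimH Γ := (contDiff_rowProj hur).contDiffOn.dimH_image_le convex_univ (subset_univ _)

/-- Lemma 1.5: for `m + u ≤ n` and an approximating function
`ψ`, with `Γ` the set of pairs `(X, α)` such that the `m × (n-u)` matrix `X̃`
of the last `n - u` columns of `X` has rank at most `m - 1` (equivalently every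
`m × m` minor vanishes), one has `W_{u,α}(m,n;ψ) ⊆ Γ`,
`dim Γ = mn + m + u − 1 < (m+1)n`, and hence
`dim W_{u,α}(m,n;ψ) ≤ mn + m + u − 1`. -/
theorem stmt6 (m n u : ℕ) (hm : 2 ≤ m) (hmu : m + u ≤ n)
    (ψ : ℕ → ℝ) (hψ : IsApprox ψ)
    (Γ : Set (Espace m n))
    (hΓ : Γ = {p : Espace m n |
      Matrix.rank (Matrix.of fun (i : Fin m) (j : Fin (n - u)) =>
        p.1 i ⟨u + (j : ℕ), by have := j.isLt; omega⟩) ≤ m - 1}) :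
    Wmixed m n u ψ ⊆ Γ ∧
    dimH Γ = ((m * n + m + u - 1 : ℕ) : ℝ≥0∞) ∧
    (m * n + m + u - 1 : ℕ) < (m + 1) * n ∧
    dimH (Wmixed m n u ψ) ≤ ((m * n + m + u - 1 : ℕ) : ℝ≥0∞) := by
  obtain ⟨r, rfl⟩ : ∃ r, m = r + 1 := ⟨m - 1, by omega⟩
  have hΓr : Γ = {p : Espace (r + 1) n | (tailMatrix u p.1).rank ≤ r} := hΓ
  have hW : Wmixed (r + 1) n u ψ ⊆ Γ := hΓr ▸
    (Wmixed_subset_setOf_rank_lt hψ.2.bddAbove_range).trans fun _ => Nat.lt_succ_iff.1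
  have hdim : dimH Γ = (((r + 1) * n + (r + 1) + u - 1 : ℕ) : ℝ≥0∞) := by
    rw [hΓr, dimH_setOf_rank_tailMatrix_le (by omega), finrank_rowParam]
    congr 2
    rw [add_mul, one_mul]
    omega
  refine ⟨hW, hdim, ?_, (dimH_mono hW).trans hdim.le⟩
  rw [add_mul (r + 1) 1 n]
  omega
end
end

section
/- Let m ≥ 1, n ≥ 1 be integers, let ψ be an approximating function (no monotonicity assumed), and let f and r ↦ r^{-mn} f(r) be dimension functions such that r ↦ r^{-(m+1)n} f(r) is monotonic. If Σ_{r=1}^∞ f(Ψ(r)) Ψ(r)^{-mn} r^{m+n-1} < ∞, then H^f(W_α(m,n;ψ)) = 0. -/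
open MeasureTheory Set Filter
open scoped ENNReal NNReal

noncomputable section

/-- The inhomogeneous set `W_α(m,n;ψ)` of pairs `(X, α)` in the unit cube such
that for infinitely many nonzero `q ∈ ℤ^m` there is `p ∈ ℤ^n` with
`|q·x⁽ⁱ⁾ − αᵢ − pᵢ| ≤ ψ(|q|)` for all `1 ≤ i ≤ n`, i.e. each coordinate of
`qX − α` lies within `ψ(|q|)` of an integer. -/
def Wclassical (m n : ℕ) (ψ : ℕ → ℝ) : Set (Espace m n) :=
  {p | p ∈ unitCube m n ∧
    {q : Fin m → ℤ | q ≠ 0 ∧ ∃ v : Fin n → ℤ, ∀ i : Fin n,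
      |(∑ j, (q j : ℝ) * p.1 j i) - p.2 i - (v i : ℝ)| ≤ ψ (qNorm q)}.Infinite}

/-!
For `|q| = k`, the points `(X, α)` with `qX - α` within `ψ(k)` of `ℤ^n` are covered by boxes of
side `Ψ(k)`: rounding `X` to the grid `Ψ(k) ℤ^{mn}` (about `Ψ(k)^{-mn}` choices) moves `qX` by at
most `m ψ(k) / 2`, so `α` lies within `O(ψ(k))` of one of `O(1)` integer translates of that value
and is then fixed up to `Ψ(k)` by `O(k^n)` further choices. As there are `O(k^{m-1})` vectors of
norm `k`, the levels `k ≥ R` cover `W` at `f`-cost `O(∑_{k ≥ R} f(Ψ(k)) Ψ(k)^{-mn} k^{m+n-1})`,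
a tail of a convergent series.
-/

open Topology Metric

-- The Hausdorff–Cantelli lemma.
theorem MeasureTheory.Measure.mkMetric_eq_zero_of_summable_cover
    {X : Type*} [EMetricSpace X] [MeasurableSpace X] [BorelSpace X]
    {ι : ℕ → Type*} [∀ k, Countable (ι k)] (m : ℝ≥0∞ → ℝ≥0∞) (T : ∀ k, ι k → Set X)
    {δ : ℕ → ℝ≥0∞} {g : ℕ → ℝ} {E : Set X}
    (hδ : Tendsto δ atTop (𝓝 0)) (hT : ∀ k i, ediam (T k i) ≤ δ k) (hg : Summable g)
    (hTg : ∀ᶠ k in atTop, ∑' i, m (ediam (T k i)) ≤ ENNReal.ofReal (g k))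
    (hE : ∀ᶠ R in atTop, E ⊆ ⋃ k ≥ R, ⋃ i, T k i) :
    Measure.mkMetric m E = 0 := by
  set r : ℕ → ℝ≥0∞ := fun R => ⨆ k ≥ R, δ k
  have hr : Tendsto r atTop (𝓝 0) := by
    have hanti : Antitone r := fun R R' h => biSup_mono fun k hk => h.trans hk
    simpa only [r, ← limsup_eq_iInf_iSup_of_nat, hδ.limsup_eq] using tendsto_atTop_iInf hanti
  -- stage `R` uses the levels `k ≥ R`, written `k ∉ range R` so that its cost is bounded by the
  -- tail in `ENNReal.tendsto_tsum_compl_atTop_zero`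
  have hle := mkMetric_le_liminf_tsum E r hr
    (fun R (j : Σ k : {k // k ∉ Finset.range R}, ι k) => T j.1 j.2)
    (Eventually.of_forall fun R ⟨⟨k, hk⟩, i⟩ =>
      (hT k i).trans (le_iSup₂_of_le k (not_lt.1 (Finset.mem_range.not.1 hk)) le_rfl))
    (hE.mono fun R hR x hx => by
      obtain ⟨k, hk, hxk⟩ := mem_iUnion₂.1 (hR hx)
      obtain ⟨i, hxi⟩ := mem_iUnion.1 hxk
      exact mem_iUnion.2 ⟨⟨⟨k, Finset.mem_range.not.2 (not_lt.2 hk)⟩, i⟩, hxi⟩) m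
  obtain ⟨K, hK⟩ := eventually_atTop.1 hTg
  have htail : Tendsto (fun R => ∑' k : {k // k ∉ Finset.range R}, ENNReal.ofReal (g k))
      atTop (𝓝 0) :=
    (ENNReal.tendsto_tsum_compl_atTop_zero hg.tsum_ofReal_ne_top).comp tendsto_finset_range
  refine nonpos_iff_eq_zero.1 (hle.trans ?_)
  refine (liminf_le_liminf ?_).trans htail.liminf_eq.le
  filter_upwards [eventually_ge_atTop K] with R hR
  rw [ENNReal.tsum_sigma']
  exact ENNReal.tsum_le_tsum fun ⟨k, hk⟩ =>
    hK k (hR.trans (not_lt.1 (Finset.mem_range.not.1 hk)))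

theorem Metric.ediam_closedBall_eq {E : Type*} [NormedAddCommGroup E] [NormedSpace ℝ E]
    [Nontrivial E] (x : E) {r : ℝ} (hr : 0 ≤ r) :
    ediam (closedBall x r) = ENNReal.ofReal (2 * r) := by
  rw [← diam_closedBall_eq x hr, Metric.diam,
    ENNReal.ofReal_toReal isBounded_closedBall.ediam_ne_top]

section IntCube

variable (ι : Type*) [Fintype ι] [DecidableEq ι]

def intCube (N : ℕ) : Finset (ι → ℤ) :=
  Fintype.piFinset fun _ => Finset.Icc (-(N : ℤ)) N

variable {ι}

theorem mem_intCube {N : ℕ} {z : ι → ℤ} : z ∈ intCube ι N ↔ ∀ i, |z i| ≤ N := by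
  simp only [intCube, Fintype.mem_piFinset, Finset.mem_Icc, abs_le]

theorem card_intCube (N : ℕ) : (intCube ι N).card = (2 * N + 1) ^ Fintype.card ι := by
  simp only [intCube, Fintype.card_piFinset, Int.card_Icc, Finset.prod_const, Finset.card_univ]
  congr 1
  omega

end IntCube

def qSphere (m k : ℕ) : Finset (Fin m → ℤ) := {q ∈ intCube (Fin m) k | qNorm q = k}

theorem natAbs_le_qNorm {m : ℕ} (q : Fin m → ℤ) (j : Fin m) : (q j).natAbs ≤ qNorm q :=
  Finset.le_sup (f := fun i => (q i).natAbs) (Finset.mem_univ j)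

theorem abs_intCast_le_qNorm {m : ℕ} (q : Fin m → ℤ) (j : Fin m) : |(q j : ℝ)| ≤ qNorm q := by
  rw [← Int.cast_abs, Int.abs_eq_natAbs]
  exact_mod_cast natAbs_le_qNorm q j

theorem mem_qSphere {m k : ℕ} {q : Fin m → ℤ} : q ∈ qSphere m k ↔ qNorm q = k := by
  refine ⟨fun h => (Finset.mem_filter.1 h).2, fun h => Finset.mem_filter.2 ⟨?_, h⟩⟩
  refine mem_intCube.2 fun j => ?_
  rw [Int.abs_eq_natAbs, ← h]
  exact_mod_cast natAbs_le_qNorm q j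

/-- Each point of the sphere has a coordinate `± k`: the sphere is covered by `m` pairs of faces. -/
theorem card_qSphere_le (m : ℕ) {k : ℕ} (hk : 1 ≤ k) :
    (qSphere m k).card ≤ 2 * m * (2 * k + 1) ^ (m - 1) := by
  set I : Finset ℤ := Finset.Icc (-(k : ℤ)) k
  set face : Fin m → Finset (Fin m → ℤ) := fun j =>
    Fintype.piFinset (Function.update (fun _ => I) j {(k : ℤ), -(k : ℤ)})
  have hsub : qSphere m k ⊆ Finset.univ.biUnion face := by
    intro q hq
    have hqk := mem_qSphere.1 hq
    have hne : (Finset.univ : Finset (Fin m)).Nonempty := by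
      obtain ⟨j, hj, -⟩ := Finset.lt_sup_iff.1 (show 0 < qNorm q by omega)
      exact ⟨j, hj⟩
    obtain ⟨j, -, hj⟩ := Finset.exists_mem_eq_sup Finset.univ hne fun i => (q i).natAbs
    refine Finset.mem_biUnion.2 ⟨j, Finset.mem_univ _, Fintype.mem_piFinset.2 fun j' => ?_⟩
    rcases eq_or_ne j' j with rfl | h
    · simp only [Function.update_self, Finset.mem_insert, Finset.mem_singleton]
      have : (q j').natAbs = k := hj ▸ hqk
      omega
    · rw [Function.update_of_ne h]
      have := natAbs_le_qNorm q j'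
      simp only [I, Finset.mem_Icc]
      omega
  have hface : ∀ j, (face j).card ≤ 2 * (2 * k + 1) ^ (m - 1) := by
    intro j
    rw [Fintype.card_piFinset, ← Finset.mul_prod_erase _ _ (Finset.mem_univ j),
      Function.update_self, Finset.prod_congr rfl fun i hi =>
        by rw [Function.update_of_ne (Finset.ne_of_mem_erase hi)],
      Finset.prod_const, Finset.card_erase_of_mem (Finset.mem_univ j), Finset.card_univ,
      Fintype.card_fin, Int.card_Icc]
    gcongr
    · exact Finset.card_le_two
    · omega
  calc (qSphere m k).card ≤ ∑ j, (face j).card :=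
        (Finset.card_le_card hsub).trans Finset.card_biUnion_le
    _ ≤ ∑ _j : Fin m, 2 * (2 * k + 1) ^ (m - 1) := Finset.sum_le_sum fun j _ => hface j
    _ = 2 * m * (2 * k + 1) ^ (m - 1) := by
        simp only [Finset.sum_const, Finset.card_univ, Fintype.card_fin, smul_eq_mul]
        ring

section Round

variable {K : Type*} [Field K] [LinearOrder K] [IsStrictOrderedRing K] [FloorRing K]

theorem abs_round_le (x : K) : |(round x : K)| ≤ |x| + 1 / 2 := by
  have := abs_sub_round x
  calc |(round x : K)| = |x - (x - round x)| := by ring_nf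
    _ ≤ |x| + |x - round x| := abs_sub _ _
    _ ≤ |x| + 1 / 2 := by linarith

theorem abs_sub_mul_round_div_le {Ψ : K} (hΨ : 0 < Ψ) (x : K) :
    |x - Ψ * round (x / Ψ)| ≤ Ψ / 2 := by
  calc |x - Ψ * round (x / Ψ)| = Ψ * |x / Ψ - round (x / Ψ)| := by
        rw [← abs_of_pos hΨ, ← abs_mul, abs_of_pos hΨ, mul_sub, mul_div_cancel₀ _ hΨ.ne']
    _ ≤ Ψ * (1 / 2) := by gcongr; exact abs_sub_round _
    _ = Ψ / 2 := by ring

theorem exists_mem_intCube_abs_sub_mul_le {ι : Type*} [Fintype ι] [DecidableEq ι] {Ψ : K}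
    (hΨ : 0 < Ψ) (hΨ1 : Ψ ≤ 1) {x : ι → K} (hx : ∀ i, |x i| ≤ 1 / 2) :
    ∃ a ∈ intCube ι ⌈Ψ⁻¹⌉₊, ∀ i, |x i - Ψ * a i| ≤ Ψ / 2 := by
  refine ⟨fun i => round (x i / Ψ), mem_intCube.2 fun i => ?_,
    fun i => abs_sub_mul_round_div_le hΨ (x i)⟩
  have hbound : |x i / Ψ| ≤ Ψ⁻¹ / 2 := by
    rw [abs_div, abs_of_pos hΨ, div_le_iff₀ hΨ, div_mul_eq_mul_div, inv_mul_cancel₀ hΨ.ne']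
    exact hx i
  have h1 : (1 : K) ≤ Ψ⁻¹ := one_le_inv_iff₀.2 ⟨hΨ, hΨ1⟩
  have : (|round (x i / Ψ)| : K) ≤ ⌈Ψ⁻¹⌉₊ := by
    linarith [abs_round_le (x i / Ψ), Nat.le_ceil Ψ⁻¹]
  exact_mod_cast this

theorem exists_abs_sub_round_add_mul_le {Ψ B α s : K} (hΨ : 0 < Ψ) (v : ℤ) (hα : |α| ≤ 1 / 2)
    (hw : |α - s + v| ≤ B) :
    ∃ d u : ℤ, |(d : K)| ≤ B + 1 ∧ |(u : K)| ≤ B / Ψ + 1 / 2 ∧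
      |α - (s - (round s + d) + Ψ * u)| ≤ Ψ / 2 := by
  refine ⟨v - round s, round ((α - s + v) / Ψ), ?_, ?_, ?_⟩
  · have h1 := abs_le.1 hw
    have h2 := abs_le.1 hα
    have h3 := abs_le.1 (abs_sub_round s)
    push_cast
    rw [abs_le]
    constructor <;> linarith
  · refine (abs_round_le _).trans ?_
    rw [abs_div, abs_of_pos hΨ]
    gcongr
  · refine (abs_sub_mul_round_div_le hΨ (α - s + v)).trans_eq' (congrArg _ ?_)
    push_cast
    ring

end Round

theorem abs_sum_mul_sub_sum_mul_le {m : ℕ} (q : Fin m → ℤ) {x y : Fin m → ℝ} {ε : ℝ}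
    (h : ∀ j, |x j - y j| ≤ ε) :
    |∑ j, q j * x j - ∑ j, q j * y j| ≤ m * qNorm q * ε := by
  rw [← Finset.sum_sub_distrib]
  calc |∑ j, (q j * x j - q j * y j)| ≤ ∑ j, |(q j : ℝ)| * |x j - y j| := by
        simpa only [← mul_sub, abs_mul] using Finset.abs_sum_le_sum_abs
          (fun j => (q j : ℝ) * (x j - y j)) Finset.univ
    _ ≤ ∑ _j : Fin m, (qNorm q * ε : ℝ) := Finset.sum_le_sum fun j _ =>
        mul_le_mul (abs_intCast_le_qNorm q j) (h j) (abs_nonneg _) (Nat.cast_nonneg _)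
    _ = m * qNorm q * ε := by
        simp only [Finset.sum_const, Finset.card_univ, Fintype.card_fin, nsmul_eq_mul]
        ring

theorem mem_closedBall_espace {m n : ℕ} {p c : Espace m n} {r : ℝ} (hr : 0 ≤ r) :
    p ∈ closedBall c r ↔ (∀ j i, |p.1 j i - c.1 j i| ≤ r) ∧ ∀ i, |p.2 i - c.2 i| ≤ r := by
  simp only [mem_closedBall, Prod.dist_eq, max_le_iff, dist_pi_le_iff hr, Real.dist_eq]

theorem ediam_closedBall_espace {m n : ℕ} (hn : 1 ≤ n) (c : Espace m n) {r : ℝ} (hr : 0 ≤ r) :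
    ediam (closedBall c r) = ENNReal.ofReal (2 * r) := by
  have : NeZero n := ⟨by omega⟩
  exact ediam_closedBall_eq c hr

/-- The `X`-part is a point of the grid `Ψ ℤ^{mn}`; with `s = q X` at that point, the `α`-part is a
point of the grid `s - v + Ψ ℤ^n` for the integer vector `v = round s + d`. -/
def gridCenter {m n : ℕ} (Ψ : ℝ) (q : Fin m → ℤ) (a : Fin m × Fin n → ℤ) (d u : Fin n → ℤ) :
    Espace m n :=
  (fun j i => Ψ * a (j, i), fun i =>
    let s := ∑ j, q j * (Ψ * a (j, i))
    s - (round s + d i) + Ψ * u i)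

theorem exists_mem_closedBall_gridCenter {m n k : ℕ} (hk : 1 ≤ k) {Ψ : ℝ} (hΨ : 0 < Ψ)
    (hkΨ : k * Ψ ≤ 1) {q : Fin m → ℤ} (hq : qNorm q = k) {p : Espace m n}
    (hp : p ∈ unitCube m n) {v : Fin n → ℤ}
    (hv : ∀ i, |∑ j, q j * p.1 j i - p.2 i - v i| ≤ k * Ψ) :
    ∃ a ∈ intCube (Fin m × Fin n) ⌈Ψ⁻¹⌉₊, ∃ d ∈ intCube (Fin n) (m + 2),
      ∃ u ∈ intCube (Fin n) ((m + 2) * k), p ∈ closedBall (gridCenter Ψ q a d u) (Ψ / 2) := by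
  have hk' : (1 : ℝ) ≤ k := by exact_mod_cast hk
  obtain ⟨a, ha, hXa⟩ := exists_mem_intCube_abs_sub_mul_le
    (x := fun ji : Fin m × Fin n => p.1 ji.1 ji.2) hΨ (by nlinarith) fun ji => hp.1 ji.1 ji.2
  set s : Fin n → ℝ := fun i => ∑ j, q j * (Ψ * a (j, i))
  have hs : ∀ i, |p.2 i - s i + v i| ≤ (m + 1) * (k * Ψ) := by
    intro i
    have h1 := abs_sum_mul_sub_sum_mul_le q (x := fun j => p.1 j i)
      (y := fun j => Ψ * a (j, i)) fun j => hXa (j, i)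
    rw [hq] at h1
    calc |p.2 i - s i + v i|
          = |(∑ j, q j * p.1 j i - s i) - (∑ j, q j * p.1 j i - p.2 i - v i)| := by ring_nf
      _ ≤ m * k * (Ψ / 2) + k * Ψ := (abs_sub _ _).trans (add_le_add h1 (hv i))
      _ ≤ (m + 1) * (k * Ψ) := by
          have : (0 : ℝ) ≤ m * (k * Ψ) := by positivity
          linarith
  choose d u hd hu hdu using fun i =>
    exists_abs_sub_round_add_mul_le hΨ (v i) (hp.2 i) (hs i)
  refine ⟨a, ha, d, mem_intCube.2 fun i => ?_, u, mem_intCube.2 fun i => ?_,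
    (mem_closedBall_espace (by positivity)).2 ⟨fun j i => ?_, fun i => hdu i⟩⟩
  · have : (|d i| : ℝ) ≤ (m + 2 : ℕ) := by push_cast; nlinarith [hd i]
    exact_mod_cast this
  · have : (|u i| : ℝ) ≤ ((m + 2) * k : ℕ) := by
      have := hu i
      rw [mul_div_assoc, mul_div_cancel_right₀ _ hΨ.ne'] at this
      push_cast; nlinarith
    exact_mod_cast this
  · exact hXa (j, i)

def Psi (ψ : ℕ → ℝ) (k : ℕ) : ℝ := ψ k / k

theorem mul_Psi {ψ : ℕ → ℝ} {k : ℕ} (hk : 1 ≤ k) : k * Psi ψ k = ψ k :=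
  mul_div_cancel₀ _ (by positivity)

theorem tendsto_Psi {ψ : ℕ → ℝ} (hψ : IsApprox ψ) : Tendsto (Psi ψ) atTop (𝓝 0) := by
  refine squeeze_zero' (Eventually.of_forall fun k => div_nonneg (hψ.1 k).le k.cast_nonneg) ?_
    hψ.2
  filter_upwards [eventually_ge_atTop 1] with k hk
  exact div_le_self (hψ.1 k).le (by exact_mod_cast hk)

abbrev GridIndex (m n : ℕ) := (Fin m → ℤ) × (Fin m × Fin n → ℤ) × (Fin n → ℤ) × (Fin n → ℤ)

def levelIndex (m n : ℕ) (ψ : ℕ → ℝ) (k : ℕ) : Finset (GridIndex m n) :=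
  qSphere m k ×ˢ intCube (Fin m × Fin n) ⌈(Psi ψ k)⁻¹⌉₊ ×ˢ intCube (Fin n) (m + 2) ×ˢ
    intCube (Fin n) ((m + 2) * k)

def levelBall {m n : ℕ} (ψ : ℕ → ℝ) (k : ℕ) (i : GridIndex m n) : Set (Espace m n) :=
  closedBall (gridCenter (Psi ψ k) i.1 i.2.1 i.2.2.1 i.2.2.2) (Psi ψ k / 2)

theorem ediam_levelBall {m n : ℕ} (hn : 1 ≤ n) {ψ : ℕ → ℝ} (hψ : ∀ r, 0 < ψ r) (k : ℕ)
    (i : GridIndex m n) : ediam (levelBall ψ k i) = ENNReal.ofReal (Psi ψ k) := by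
  have : 0 ≤ Psi ψ k := div_nonneg (hψ k).le k.cast_nonneg
  rw [levelBall, ediam_closedBall_espace hn _ (by positivity), mul_div_cancel₀ _ two_ne_zero]

theorem Wclassical_subset_iUnion_levelBall {m n : ℕ} {ψ : ℕ → ℝ} (hψ : ∀ r, 0 < ψ r) {R : ℕ}
    (hR : 1 ≤ R) (hψ1 : ∀ k ≥ R, ψ k ≤ 1) :
    Wclassical m n ψ ⊆ ⋃ k ≥ R, ⋃ i : levelIndex m n ψ k, levelBall ψ k i := by
  rintro p ⟨hp, hinf⟩
  have hsmall : {q : Fin m → ℤ | qNorm q < R}.Finite :=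
    (intCube (Fin m) R).finite_toSet.subset fun q hq => mem_intCube.2 fun j => by
      have := natAbs_le_qNorm q j
      simp only [mem_ofPred_eq] at hq
      rw [Int.abs_eq_natAbs]
      omega
  obtain ⟨q, ⟨-, v, hv⟩, hqR⟩ := not_subset.1 fun h => hinf (hsmall.subset h)
  set k := qNorm q with hk
  replace hqR : R ≤ k := not_lt.1 hqR
  have hΨ : 0 < Psi ψ k := div_pos (hψ k) (by norm_cast; omega)
  rw [← mul_Psi (ψ := ψ) (hR.trans hqR)] at hv
  obtain ⟨a, ha, d, hd, u, hu, hpu⟩ := exists_mem_closedBall_gridCenter (hR.trans hqR) hΨ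
    ((mul_Psi (hR.trans hqR)).trans_le (hψ1 k hqR)) hk.symm hp hv
  refine mem_iUnion₂.2 ⟨k, hqR, mem_iUnion.2 ⟨⟨(q, a, d, u), ?_⟩, hpu⟩⟩
  simp only [levelIndex, Finset.mem_product, mem_qSphere]
  exact ⟨hk.symm, ha, hd, hu⟩

def gridConst (m n : ℕ) : ℝ := 2 * m * 3 ^ (m - 1) * 5 ^ (m * n) * (2 * m + 5) ^ (2 * n)

theorem card_levelIndex_le {m n : ℕ} {ψ : ℕ → ℝ} {k : ℕ} (hk : 1 ≤ k) (hΨ : 0 < Psi ψ k)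
    (hΨ1 : Psi ψ k ≤ 1) :
    ((levelIndex m n ψ k).card : ℝ) ≤
      gridConst m n * (Psi ψ k ^ (-((m * n : ℕ) : ℤ)) * k ^ (m + n - 1)) := by
  have hk' : (1 : ℝ) ≤ k := by exact_mod_cast hk
  have hsphere : ((qSphere m k).card : ℝ) ≤ 2 * m * 3 ^ (m - 1) * k ^ (m - 1) := by
    calc _ ≤ ((2 * m * (2 * k + 1) ^ (m - 1) : ℕ) : ℝ) := mod_cast card_qSphere_le m hk
      _ ≤ 2 * m * (3 * k) ^ (m - 1) := by push_cast; gcongr; linarith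
      _ = _ := by rw [mul_pow]; ring
  have hX : ((intCube (Fin m × Fin n) ⌈(Psi ψ k)⁻¹⌉₊).card : ℝ) ≤
      5 ^ (m * n) * Psi ψ k ^ (-((m * n : ℕ) : ℤ)) := by
    have h1 : (1 : ℝ) ≤ (Psi ψ k)⁻¹ := one_le_inv_iff₀.2 ⟨hΨ, hΨ1⟩
    have h2 := Nat.ceil_lt_add_one (inv_nonneg.2 hΨ.le)
    rw [card_intCube, Fintype.card_prod, Fintype.card_fin, Fintype.card_fin, zpow_neg,
      zpow_natCast, ← inv_pow, ← mul_pow]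
    push_cast
    gcongr
    linarith
  have hD : ((intCube (Fin n) (m + 2)).card : ℝ) = (2 * m + 5) ^ n := by
    rw [card_intCube, Fintype.card_fin]; push_cast; ring
  have hU : ((intCube (Fin n) ((m + 2) * k)).card : ℝ) ≤ (2 * m + 5) ^ n * k ^ n := by
    rw [card_intCube, Fintype.card_fin, ← mul_pow]; push_cast; gcongr; nlinarith
  have hpow : (m : ℝ) * k ^ (m - 1) * k ^ n = m * k ^ (m + n - 1) := by
    rcases m with _ | m
    · simp
    · rw [mul_assoc, ← pow_add]; congr 3; omega
  have hz : 0 ≤ Psi ψ k ^ (-((m * n : ℕ) : ℤ)) := by positivity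
  generalize Psi ψ k ^ (-((m * n : ℕ) : ℤ)) = z at hX hz ⊢
  simp only [levelIndex, Finset.card_product, Nat.cast_mul, hD]
  calc _ ≤ (2 * m * 3 ^ (m - 1) * k ^ (m - 1)) * ((5 ^ (m * n) * z) *
        ((2 * m + 5) ^ n * ((2 * m + 5) ^ n * k ^ n))) := by gcongr
    _ = gridConst m n * (z * k ^ (m + n - 1)) := by
        rw [gridConst]
        linear_combination (2 * 3 ^ (m - 1) * 5 ^ (m * n) * (2 * m + 5) ^ (2 * n) * z) * hpow

theorem tsum_levelBall_le {m n : ℕ} (hn : 1 ≤ n) {ψ : ℕ → ℝ} (hψ : ∀ r, 0 < ψ r)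
    {f : ℝ → ℝ} (hf : ∀ r, 0 < r → 0 < f r) {k : ℕ} (hk : 1 ≤ k) (hψ1 : ψ k ≤ 1) :
    ∑' i : levelIndex m n ψ k, ENNReal.ofReal (f (ediam (levelBall ψ k i.1)).toReal) ≤
      ENNReal.ofReal (gridConst m n *
        (f (Psi ψ k) * Psi ψ k ^ (-((m * n : ℕ) : ℤ)) * k ^ (m + n - 1))) := by
  have hΨ : 0 < Psi ψ k := div_pos (hψ k) (by positivity)
  have hΨ1 : Psi ψ k ≤ 1 := (div_le_self (hψ k).le (by exact_mod_cast hk)).trans hψ1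
  simp only [ediam_levelBall hn hψ, ENNReal.toReal_ofReal hΨ.le, tsum_fintype, Finset.sum_const,
    Finset.card_univ, Fintype.card_coe, nsmul_eq_mul]
  rw [← ENNReal.ofReal_natCast, ← ENNReal.ofReal_mul (by positivity)]
  refine ENNReal.ofReal_le_ofReal ?_
  calc _ ≤ gridConst m n * (Psi ψ k ^ (-((m * n : ℕ) : ℤ)) * k ^ (m + n - 1)) *
        f (Psi ψ k) := by
        gcongr
        · exact (hf _ hΨ).le
        · exact card_levelIndex_le hk hΨ hΨ1
    _ = _ := by ring

theorem stmt13_general (m n : ℕ) (hn : 1 ≤ n)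
    (ψ : ℕ → ℝ) (hψ : IsApprox ψ) (f : ℝ → ℝ) (hf : IsDimFun f)
    (hconv : Summable fun r : ℕ =>
      f (ψ (r + 1) / (r + 1)) * (ψ (r + 1) / (r + 1)) ^ (-((m * n : ℕ) : ℤ)) *
        ((r : ℝ) + 1) ^ (m + n - 1)) :
    hGauge f (Wclassical m n ψ) = 0 := by
  have hsum : Summable fun k : ℕ => gridConst m n *
      (f (Psi ψ k) * Psi ψ k ^ (-((m * n : ℕ) : ℤ)) * k ^ (m + n - 1)) := by
    refine (summable_nat_add_iff 1).1 ?_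
    simpa only [Psi, Nat.cast_add, Nat.cast_one] using hconv.mul_left (gridConst m n)
  have hψ1 : ∀ᶠ k in atTop, ψ k ≤ 1 := hψ.2.eventually (ge_mem_nhds one_pos)
  obtain ⟨K, hK⟩ := eventually_atTop.1 hψ1
  have hδ : Tendsto (fun k => ENNReal.ofReal (Psi ψ k)) atTop (𝓝 0) := by
    simpa only [ENNReal.ofReal_zero] using ENNReal.tendsto_ofReal (tendsto_Psi hψ)
  rw [hGauge]
  refine Measure.mkMetric_eq_zero_of_summable_cover _
    (fun k (i : levelIndex m n ψ k) => levelBall ψ k i.1) hδ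
    (fun k i => (ediam_levelBall hn hψ.1 k i.1).le) hsum ?_ ?_
  · filter_upwards [eventually_ge_atTop 1, hψ1] with k hk hψk
    exact tsum_levelBall_le hn hψ.1 hf.2.2.1 hk hψk
  · filter_upwards [eventually_ge_atTop 1, eventually_ge_atTop K] with R hR hRK
    exact Wclassical_subset_iUnion_levelBall hψ.1 hR fun k hk => hK k (hRK.trans hk)

/-- Theorem 2.4, convergence part: let `ψ` be an
approximating function (no monotonicity assumed), `f` and `r ↦ r^{-mn} f(r)`
dimension functions with `r ↦ r^{-(m+1)n} f(r)` monotonic. If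
`∑_{r≥1} f(Ψ(r)) Ψ(r)^{-mn} r^{m+n-1} < ∞` (where `Ψ(r) = ψ(r)/r`), then
`H^f(W_α(m,n;ψ)) = 0`. -/
theorem stmt13 (m n : ℕ) (hm : 1 ≤ m) (hn : 1 ≤ n)
    (ψ : ℕ → ℝ) (hψ : IsApprox ψ) (f : ℝ → ℝ) (hf : IsDimFun f)
    (hf2 : IsDimFun fun r : ℝ => r ^ (-((m * n : ℕ) : ℤ)) * f r)
    (hmono : MonoOn fun r : ℝ => r ^ (-(((m + 1) * n : ℕ) : ℤ)) * f r)
    (hconv : Summable fun r : ℕ =>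
      f (ψ (r + 1) / (r + 1)) * (ψ (r + 1) / (r + 1)) ^ (-((m * n : ℕ) : ℤ)) *
        ((r : ℝ) + 1) ^ (m + n - 1)) :
    hGauge f (Wclassical m n ψ) = 0 :=
  stmt13_general m n hn ψ hψ f hf hconv
end
end
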